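/- For the trace τ on K_N with τ(1) = τ_0, τ(e) = τ_0/2 + iτ_1, τ(α_i) = 0 and an element a = λ1 + μe + Σ a^i α_i, one has τ(a* a) = (|λ|² + Re(λ μ̄))τ_0 + 2 Im(λ μ̄) τ_1. -/

import Mathlib

open Complex BigOperators

/-- The generalized Kronecker algebra `K_N`: elements `λ•1 + μ•e + ∑ aⁱ αᵢ`
represented by their coefficients. -/
@[ext] structure Kron (N : ℕ) where
  lam : ℂ
  mu : ℂ
  al : Fin N → ℂ

namespace Kron

variable {N : ℕ}

instance : Zero (Kron N) := ⟨⟨0, 0, fun _ => 0⟩⟩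
instance : One (Kron N) := ⟨⟨1, 0, fun _ => 0⟩⟩
instance : Add (Kron N) := ⟨fun x y => ⟨x.lam + y.lam, x.mu + y.mu, fun i => x.al i + y.al i⟩⟩
instance : Neg (Kron N) := ⟨fun x => ⟨-x.lam, -x.mu, fun i => -x.al i⟩⟩
instance : Mul (Kron N) :=
  ⟨fun x y => ⟨x.lam * y.lam, x.lam * y.mu + y.lam * x.mu + x.mu * y.mu,
    fun i => (x.lam + x.mu) * y.al i + y.lam * x.al i⟩⟩
instance : SMul ℂ (Kron N) := ⟨fun c x => ⟨c * x.lam, c * x.mu, fun i => c * x.al i⟩⟩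

@[simp] lemma mk_lam (l m : ℂ) (v : Fin N → ℂ) : (Kron.mk l m v).lam = l := rfl
@[simp] lemma mk_mu (l m : ℂ) (v : Fin N → ℂ) : (Kron.mk l m v).mu = m := rfl
@[simp] lemma mk_al (l m : ℂ) (v : Fin N → ℂ) (i : Fin N) : (Kron.mk l m v).al i = v i := rfl
@[simp] lemma zero_lam : (0 : Kron N).lam = 0 := rfl
@[simp] lemma zero_mu : (0 : Kron N).mu = 0 := rfl
@[simp] lemma zero_al (i : Fin N) : (0 : Kron N).al i = 0 := rfl
@[simp] lemma one_lam : (1 : Kron N).lam = 1 := rfl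
@[simp] lemma one_mu : (1 : Kron N).mu = 0 := rfl
@[simp] lemma one_al (i : Fin N) : (1 : Kron N).al i = 0 := rfl
@[simp] lemma add_lam (x y : Kron N) : (x + y).lam = x.lam + y.lam := rfl
@[simp] lemma add_mu (x y : Kron N) : (x + y).mu = x.mu + y.mu := rfl
@[simp] lemma add_al (x y : Kron N) (i : Fin N) : (x + y).al i = x.al i + y.al i := rfl
@[simp] lemma neg_lam (x : Kron N) : (-x).lam = -x.lam := rfl
@[simp] lemma neg_mu (x : Kron N) : (-x).mu = -x.mu := rfl
@[simp] lemma neg_al (x : Kron N) (i : Fin N) : (-x).al i = -x.al i := rfl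
@[simp] lemma mul_lam (x y : Kron N) : (x * y).lam = x.lam * y.lam := rfl
@[simp] lemma mul_mu (x y : Kron N) :
    (x * y).mu = x.lam * y.mu + y.lam * x.mu + x.mu * y.mu := rfl
@[simp] lemma mul_al (x y : Kron N) (i : Fin N) :
    (x * y).al i = (x.lam + x.mu) * y.al i + y.lam * x.al i := rfl
@[simp] lemma smul_lam (c : ℂ) (x : Kron N) : (c • x).lam = c * x.lam := rfl
@[simp] lemma smul_mu (c : ℂ) (x : Kron N) : (c • x).mu = c * x.mu := rfl
@[simp] lemma smul_al (c : ℂ) (x : Kron N) (i : Fin N) : (c • x).al i = c * x.al i := rfl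

instance : AddCommGroup (Kron N) where
  add_assoc := by intros; ext <;> simp <;> ring
  zero_add := by intros; ext <;> simp
  add_zero := by intros; ext <;> simp
  add_comm := by intros; ext <;> simp <;> ring
  neg_add_cancel := by intros; ext <;> simp
  nsmul := nsmulRec
  zsmul := zsmulRec

instance : Ring (Kron N) :=
  { (inferInstance : AddCommGroup (Kron N)) with
    left_distrib := by intros; ext <;> simp <;> ring
    right_distrib := by intros; ext <;> simp <;> ring
    zero_mul := by intros; ext <;> simp
    mul_zero := by intros; ext <;> simp
    mul_assoc := by intros; ext <;> simp <;> ring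
    one_mul := by intros; ext <;> simp
    mul_one := by intros; ext <;> simp }

instance : Module ℂ (Kron N) where
  one_smul := by intros; ext <;> simp
  mul_smul := by intros; ext <;> simp <;> ring
  smul_zero := by intros; ext <;> simp
  smul_add := by intros; ext <;> simp <;> ring
  add_smul := by intros; ext <;> simp <;> ring
  zero_smul := by intros; ext <;> simp

instance : Algebra ℂ (Kron N) :=
  Algebra.ofModule (fun _ _ _ => by ext <;> simp <;> ring)
    (fun _ _ _ => by ext <;> simp <;> ring)

/-- The idempotent generator `e`. -/
def e : Kron N := ⟨0, 1, fun _ => 0⟩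

/-- The arrow generators `α i`. -/
def α (i : Fin N) : Kron N := ⟨0, 0, fun j => if j = i then 1 else 0⟩

@[simp] lemma e_lam : (e : Kron N).lam = 0 := rfl
@[simp] lemma e_mu : (e : Kron N).mu = 1 := rfl
@[simp] lemma e_al (i : Fin N) : (e : Kron N).al i = 0 := rfl
@[simp] lemma α_lam (i : Fin N) : (α i : Kron N).lam = 0 := rfl
@[simp] lemma α_mu (i : Fin N) : (α i : Kron N).mu = 0 := rfl
@[simp] lemma α_al (i j : Fin N) : (α i : Kron N).al j = if j = i then 1 else 0 := rfl

/-- The `*`-structure: `(λ1 + μe + aⁱαᵢ)* = (λ̄+μ̄)1 − μ̄e + āⁱαᵢ`. -/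
instance : Star (Kron N) :=
  ⟨fun x => ⟨starRingEnd ℂ x.lam + starRingEnd ℂ x.mu, -(starRingEnd ℂ x.mu),
    fun i => starRingEnd ℂ (x.al i)⟩⟩

@[simp] lemma star_lam (x : Kron N) :
    (star x).lam = starRingEnd ℂ x.lam + starRingEnd ℂ x.mu := rfl
@[simp] lemma star_mu (x : Kron N) : (star x).mu = -(starRingEnd ℂ x.mu) := rfl
@[simp] lemma star_al (x : Kron N) (i : Fin N) : (star x).al i = starRingEnd ℂ (x.al i) := rfl

/-- The derivation `∂_k` with `∂_k e = i α_k`, `∂_k α_l = 0`. -/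
def dK (k : Fin N) : Kron N →ₗ[ℂ] Kron N where
  toFun x := ⟨0, 0, fun j => x.mu * Complex.I * (if j = k then 1 else 0)⟩
  map_add' := by intros; ext <;> simp <;> (try split) <;> ring
  map_smul' := by intros; ext <;> simp <;> (try split) <;> ring

/-- The derivation `∂_k^l` with `∂_k^l e = 0`, `∂_k^l α_j = δ_j^l α_k`. -/
def dKK (k l : Fin N) : Kron N →ₗ[ℂ] Kron N where
  toFun x := ⟨0, 0, fun j => x.al l * (if j = k then 1 else 0)⟩
  map_add' := by intros; ext <;> simp <;> (try split) <;> ring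
  map_smul' := by intros; ext <;> simp <;> (try split) <;> ring

end Kron

/-
A linear functional vanishing on the arrows `αᵢ` only sees the `1`- and `e`-coordinates:
`τ x = x.lam τ(1) + x.mu τ(e)`. For `x = a* a` these coordinates are `|λ|² + λμ̄` and
`conj(λμ̄) − λμ̄ = −2i Im(λμ̄)`; multiplying out against `τ(1) = τ₀` and `τ(e) = τ₀/2 + iτ₁`
the imaginary parts cancel.
-/

namespace Kron

variable {N : ℕ}

lemma sum_lam {ι : Type*} (s : Finset ι) (f : ι → Kron N) :
    (∑ i ∈ s, f i).lam = ∑ i ∈ s, (f i).lam :=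
  map_sum (AddMonoidHom.mk' lam add_lam) f s

lemma sum_mu {ι : Type*} (s : Finset ι) (f : ι → Kron N) :
    (∑ i ∈ s, f i).mu = ∑ i ∈ s, (f i).mu :=
  map_sum (AddMonoidHom.mk' mu add_mu) f s

lemma sum_al {ι : Type*} (s : Finset ι) (f : ι → Kron N) (j : Fin N) :
    (∑ i ∈ s, f i).al j = ∑ i ∈ s, (f i).al j :=
  map_sum (AddMonoidHom.mk' (fun x : Kron N => x.al j) fun x y => add_al x y j) f s

lemma smul_one_add_smul_e_add_sum_smul_α (l m : ℂ) (v : Fin N → ℂ) :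
    l • (1 : Kron N) + m • e + ∑ i, v i • α i = ⟨l, m, v⟩ := by
  ext <;> simp [sum_lam, sum_mu, sum_al]

lemma apply_eq_of_apply_α_eq_zero {M : Type*} [AddCommMonoid M] [Module ℂ M]
    (τ : Kron N →ₗ[ℂ] M) (hα : ∀ i, τ (α i) = 0) (x : Kron N) :
    τ x = x.lam • τ 1 + x.mu • τ e := by
  obtain ⟨l, m, v⟩ := x
  conv_lhs => rw [← smul_one_add_smul_e_add_sum_smul_α l m v]
  simp [hα]

lemma star_mul_self_lam (x : Kron N) :
    (star x * x).lam = ‖x.lam‖ ^ 2 + x.lam * starRingEnd ℂ x.mu := by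
  rw [mul_lam, star_lam, add_mul, Complex.conj_mul', mul_comm (starRingEnd ℂ x.mu)]

lemma star_mul_self_mu (x : Kron N) :
    (star x * x).mu = -((2 * (x.lam * starRingEnd ℂ x.mu).im : ℝ) * Complex.I) := by
  rw [← Complex.sub_conj, mul_mu, star_lam, star_mu, map_mul, Complex.conj_conj]
  ring

end Kron

/-- the value of a trace on `a*a`. -/
theorem stmt_11 (N : ℕ) (t0 t1 : ℝ) (τ : Kron N →ₗ[ℂ] ℂ)
    (h1 : τ 1 = (t0 : ℂ))
    (he : τ Kron.e = (t0 : ℂ) / 2 + (t1 : ℂ) * Complex.I)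
    (hα : ∀ i, τ (Kron.α i) = 0)
    (l m : ℂ) (v : Fin N → ℂ) (a : Kron N)
    (ha : a = l • (1 : Kron N) + m • Kron.e + ∑ i, v i • Kron.α i) :
    τ (star a * a) =
      (((‖l‖ ^ 2 + (l * starRingEnd ℂ m).re) * t0
        + 2 * (l * starRingEnd ℂ m).im * t1 : ℝ) : ℂ) := by
  rw [Kron.smul_one_add_smul_e_add_sum_smul_α] at ha
  subst ha
  rw [Kron.apply_eq_of_apply_α_eq_zero τ hα, Kron.star_mul_self_lam, Kron.star_mul_self_mu,
    h1, he, smul_eq_mul, smul_eq_mul]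
  set z := l * starRingEnd ℂ m
  push_cast
  linear_combination (-(t0 : ℂ)) * Complex.re_add_im z + (-2 * (z.im : ℂ) * t1) * Complex.I_sq
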